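/- arXiv:2204.03150 — 2 statements merged into one kernel-verified Lean document; each statement's English description precedes it below -/
import Mathlib

section
/- Let 0 < λ < 1, 0 < ε < 1, 0 < δ < 1. If ε > λ(1-δ)/δ, then for all P, Q, R, W > 0 satisfying λ²QW² + λRW = τ·λP for some τ with (1-λ)/ε - 1 < τ < (δ-λ)/(λ(1-δ)), both inequalities hold: (λP + λQW² + RW)/(P + λQW² + RW) > 1 - ε and (λP + λ²QW² + λRW)/(P + λ²QW² + λRW) < δ. -/
/-- The synfire condition ε > λ(1-δ)/δ guarantees both correlation bounds for packet
sizes W parameterized by τ in the admissible interval. -/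
theorem stmt1 (l ε δ : ℝ) (hl0 : 0 < l) (hl1 : l < 1) (hε0 : 0 < ε) (hε1 : ε < 1)
    (hδ0 : 0 < δ) (hδ1 : δ < 1) (hsyn : ε > l * (1 - δ) / δ) :
    ∀ P Q R W : ℝ, 0 < P → 0 < Q → 0 < R → 0 < W →
      (∃ τ : ℝ, (1 - l) / ε - 1 < τ ∧ τ < (δ - l) / (l * (1 - δ)) ∧
        l ^ 2 * Q * W ^ 2 + l * R * W = τ * (l * P)) →
      (l * P + l * Q * W ^ 2 + R * W) / (P + l * Q * W ^ 2 + R * W) > 1 - ε ∧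
      (l * P + l ^ 2 * Q * W ^ 2 + l * R * W) / (P + l ^ 2 * Q * W ^ 2 + l * R * W) < δ := by
  intro P Q R W hP hQ hR hW ⟨τ, hτ1, hτ2, hS⟩
  have hkey : l * Q * W ^ 2 + R * W = τ * P := by
    have h := hS
    have : l * (l * Q * W ^ 2 + R * W) = l * (τ * P) := by ring_nf; ring_nf at h; linarith
    exact mul_left_cancel₀ hl0.ne' this
  have hld : 0 < l * (1 - δ) := mul_pos hl0 (by linarith)
  have h1 : 1 - l - ε < ε * τ := by
    have := (div_lt_iff₀ hε0).mp (by linarith [hτ1] : (1 - l) / ε < τ + 1)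
    linarith
  have h2 : τ * (l * (1 - δ)) < δ - l := (lt_div_iff₀ hld).mp hτ2
  have hD1 : 0 < P + l * Q * W ^ 2 + R * W := by positivity
  have hD2 : 0 < P + l ^ 2 * Q * W ^ 2 + l * R * W := by positivity
  constructor
  · rw [gt_iff_lt, lt_div_iff₀ hD1]
    nlinarith [hkey, h1, hP.le]
  · rw [div_lt_iff₀ hD2]
    nlinarith [hS, h2, hP.le]
end

section
/- Assume T_ref > 0 and D₋(u) = exp(u²)∫_{-∞}^{u} exp(-v²) dv. Then for any real y, z with z > 0 and V_r < V_th, the mean map S₁(y,z) = (T_ref + (2/L)∫_{I(V_r,y,z)}^{I(V_th,y,z)} D₋(u) du)^{-1} with I(ξ,y,z) = (ξL - y)/z and L > 0 satisfies 0 < S₁(y,z) < 1/T_ref, and S₁ is strictly increasing in y. -/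
/-!
Substituting `v = u - t` gives `D₋(u) = ∫₀^∞ exp (2ut - t²) dt`, so `D₋` is positive and strictly
increasing. Increasing `y` translates the integration window `[I(V_r), I(V_th)]` to the left, so the
integral in the denominator of `S₁` is positive and strictly decreasing in `y`.
-/

open MeasureTheory Set Real

theorem setIntegral_pos_of_forall_pos {α : Type*} [MeasurableSpace α] {μ : Measure α}
    {s : Set α} {f : α → ℝ} (hs : MeasurableSet s) (hμs : μ s ≠ 0) (hf : ∀ x ∈ s, 0 < f x)
    (hfi : IntegrableOn f s μ) : 0 < ∫ x in s, f x ∂μ := by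
  have hf_nonneg : 0 ≤ᵐ[μ.restrict s] f := by
    filter_upwards [ae_restrict_mem hs] with x hx using (hf x hx).le
  rw [setIntegral_pos_iff_support_of_nonneg_ae hf_nonneg hfi]
  exact (pos_iff_ne_zero.2 hμs).trans_le (measure_mono fun x hx => ⟨(hf x hx).ne', hx⟩)

theorem StrictMono.strictMono_intervalIntegral_add {f : ℝ → ℝ} (hf : StrictMono f) {a b : ℝ}
    (hab : a < b) : StrictMono fun c => ∫ u in (a + c)..(b + c), f u := by
  intro c c' hc
  simp only [← intervalIntegral.integral_comp_add_right]
  have hint : ∀ d, IntervalIntegrable (fun u => f (u + d)) volume a b := fun d =>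
    (hf.monotone.comp (monotone_id.add_const d)).intervalIntegrable
  have hdiff : 0 < ∫ u in a..b, (f (u + c') - f (u + c)) :=
    intervalIntegral.intervalIntegral_pos_of_pos ((hint c').sub (hint c))
      (fun u => sub_pos.2 (hf (by linarith))) hab
  rw [intervalIntegral.integral_sub (hint c') (hint c)] at hdiff
  linarith

noncomputable def dMinus (u : ℝ) : ℝ :=
  exp (u ^ 2) * ∫ v in Iic u, exp (-v ^ 2)

theorem integrable_exp_two_mul_mul_sub_sq (u : ℝ) :
    Integrable fun t : ℝ => exp (2 * u * t - t ^ 2) := by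
  have hgauss : Integrable fun t : ℝ => exp (-(t - u) ^ 2) := by
    simpa using (integrable_exp_neg_mul_sq one_pos).comp_sub_right u
  convert hgauss.const_mul (exp (u ^ 2)) using 2 with t
  rw [← exp_add]
  ring_nf

theorem dMinus_eq_setIntegral_Ioi (u : ℝ) :
    dMinus u = ∫ t in Ioi 0, exp (2 * u * t - t ^ 2) := by
  have hpre : (fun t : ℝ => u - t) ⁻¹' Iio u = Ioi 0 := by
    ext t
    simp
  have hsubst : ∫ v in Iic u, exp (-v ^ 2) = ∫ t in Ioi 0, exp (-(u - t) ^ 2) := by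
    rw [integral_Iic_eq_integral_Iio, ← hpre,
      (Measure.measurePreserving_sub_left volume u).setIntegral_preimage_emb
        (Homeomorph.subLeft u).measurableEmbedding (fun v => exp (-v ^ 2))]
  rw [dMinus, hsubst, ← integral_const_mul]
  refine setIntegral_congr_fun measurableSet_Ioi fun t _ => ?_
  rw [← exp_add]
  ring_nf

theorem dMinus_pos (u : ℝ) : 0 < dMinus u := by
  rw [dMinus_eq_setIntegral_Ioi]
  exact setIntegral_pos_of_forall_pos measurableSet_Ioi (by simp) (fun t _ => exp_pos _)
    (integrable_exp_two_mul_mul_sub_sq u).integrableOn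

theorem strictMono_dMinus : StrictMono dMinus := by
  intro a b hab
  have hint := fun u => (integrable_exp_two_mul_mul_sub_sq u).integrableOn (s := Ioi 0)
  have hdiff : 0 < ∫ t in Ioi 0, (exp (2 * b * t - t ^ 2) - exp (2 * a * t - t ^ 2)) := by
    refine setIntegral_pos_of_forall_pos measurableSet_Ioi (by simp)
      (fun t (ht : 0 < t) => sub_pos.2 (exp_lt_exp.2 ?_)) ((hint b).sub (hint a))
    nlinarith
  rw [integral_sub (hint b) (hint a)] at hdiff
  rw [dMinus_eq_setIntegral_Ioi, dMinus_eq_setIntegral_Ioi]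
  linarith

/-- The Siegert mean (firing-rate) map S₁ is positive, bounded by 1/T_ref, and
strictly increasing in the input mean y. -/
theorem stmt16 (Tref L Vr Vth z : ℝ) (hT : 0 < Tref) (hL : 0 < L) (hV : Vr < Vth)
    (hz : 0 < z)
    (Dm : ℝ → ℝ)
    (hDm : Dm = fun u : ℝ => Real.exp (u ^ 2) * ∫ v in Set.Iic u, Real.exp (-v ^ 2))
    (S1 : ℝ → ℝ)
    (hS1 : S1 = fun y : ℝ =>
      (Tref + (2 / L) * ∫ u in ((Vr * L - y) / z)..((Vth * L - y) / z), Dm u)⁻¹) :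
    (∀ y : ℝ, 0 < S1 y ∧ S1 y < 1 / Tref) ∧ StrictMono S1 := by
  obtain rfl : Dm = dMinus := hDm
  subst hS1
  set G := fun y => ∫ u in ((Vr * L - y) / z)..((Vth * L - y) / z), dMinus u
  have hwindow : Vr * L / z < Vth * L / z := by gcongr
  have hG_pos : ∀ y, 0 < G y := fun y =>
    intervalIntegral.intervalIntegral_pos_of_pos strictMono_dMinus.monotone.intervalIntegrable
      dMinus_pos (by gcongr)
  have hG_anti : StrictAnti G := by
    intro y y' hy
    have hshift : ∀ ξ c, (ξ * L - c) / z = ξ * L / z + -c / z := fun ξ c => by ring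
    simp only [G, hshift]
    exact strictMono_dMinus.strictMono_intervalIntegral_add hwindow
      (div_lt_div_of_pos_right (neg_lt_neg hy) hz)
  have hden : ∀ y, Tref < Tref + 2 / L * G y := fun y =>
    lt_add_of_pos_right _ (mul_pos (by positivity) (hG_pos y))
  refine ⟨fun y => ⟨inv_pos.2 (hT.trans (hden y)), ?_⟩, fun y y' hy => ?_⟩
  · rw [one_div]
    exact inv_strictAnti₀ hT (hden y)
  · exact inv_strictAnti₀ (hT.trans (hden y')) (by gcongr; exact hG_anti hy)
end
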